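/- arXiv:2310.18564 — 2 statements merged into one kernel-verified Lean document; each statement's English description precedes it below -/
import Mathlib

section
/- Let G be a finite abelian group (written additively) and Θ : G → ℂ a signal, with triple correlation T_Θ(g₁,g₂) = ∑_{g∈G} Θ(g)·Θ(g+g₁)·Θ(g+g₂) and Fourier coefficients F_Θ(χ) = ∑_{g∈G} Θ(g)·χ(g) for characters χ : G → ℂ. Then the two-dimensional Fourier transform of the triple correlation equals the bispectrum: for all characters χ₁, χ₂ of G, ∑_{g₁∈G} ∑_{g₂∈G} T_Θ(g₁,g₂)·χ₁(g₁)·χ₂(g₂) = F_Θ(χ₁)·F_Θ(χ₂)·F_Θ((χ₁·χ₂)⁻¹), where χ₁·χ₂ is the pointwise product character and (χ₁·χ₂)⁻¹ its inverse character. -/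
/-- The triple correlation of a signal on a finite abelian group. -/
noncomputable def tripleCorr {G : Type*} [AddCommGroup G] [Fintype G] (Θ : G → ℂ) (g₁ g₂ : G) : ℂ :=
  ∑ g : G, Θ g * Θ (g + g₁) * Θ (g + g₂)

/-- The Fourier coefficient of a signal at an additive character. -/
noncomputable def fcoeff {G : Type*} [AddCommGroup G] [Fintype G] (Θ : G → ℂ)
    (χ : AddChar G ℂ) : ℂ :=
  ∑ g : G, Θ g * χ g

/-- The two-dimensional Fourier transform of the triple correlation is the bispectrum:
`∑_{g₁,g₂} T_Θ(g₁,g₂) χ₁(g₁) χ₂(g₂) = F_Θ(χ₁) F_Θ(χ₂) F_Θ((χ₁χ₂)⁻¹)`. -/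
theorem fourier_tripleCorr_eq_bispectrum {G : Type*} [AddCommGroup G] [Fintype G]
    (Θ : G → ℂ) (χ₁ χ₂ : AddChar G ℂ) :
    ∑ g₁ : G, ∑ g₂ : G, tripleCorr Θ g₁ g₂ * χ₁ g₁ * χ₂ g₂ =
      fcoeff Θ χ₁ * fcoeff Θ χ₂ * fcoeff Θ (χ₁ * χ₂)⁻¹ := by
  have lhs_eq : ∑ g₁ : G, ∑ g₂ : G, tripleCorr Θ g₁ g₂ * χ₁ g₁ * χ₂ g₂ =
      ∑ g : G, ∑ g₁ : G, ∑ g₂ : G,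
        Θ g * Θ (g + g₁) * Θ (g + g₂) * χ₁ g₁ * χ₂ g₂ := by
    simp only [tripleCorr, Finset.sum_mul]
    exact (Finset.sum_congr rfl fun g₁ _ => Finset.sum_comm).trans Finset.sum_comm
  rw [lhs_eq]
  have key : ∀ g : G, ∑ g₁ : G, ∑ g₂ : G,
      Θ g * Θ (g + g₁) * Θ (g + g₂) * χ₁ g₁ * χ₂ g₂ =
      Θ g * (χ₁ * χ₂)⁻¹ g * (∑ a : G, Θ a * χ₁ a) * (∑ b : G, Θ b * χ₂ b) := by
    intro g
    have h₁ : ∑ g₁ : G, ∑ g₂ : G, Θ g * Θ (g + g₁) * Θ (g + g₂) * χ₁ g₁ * χ₂ g₂ =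
        ∑ a : G, ∑ b : G, Θ g * Θ a * Θ b * χ₁ (a - g) * χ₂ (b - g) := by
      refine Fintype.sum_equiv (Equiv.addLeft g) _ _ fun g₁ => ?_
      refine Fintype.sum_equiv (Equiv.addLeft g) _ _ fun g₂ => ?_
      simp [add_sub_cancel_left]
    rw [h₁]
    have hchar : ∀ (χ : AddChar G ℂ) (x : G), χ (x - g) = χ x * χ (-g) := by
      intro χ x
      rw [sub_eq_add_neg, AddChar.map_add_eq_mul]
    have hinv : ((χ₁ * χ₂)⁻¹ : AddChar G ℂ) g = χ₁ (-g) * χ₂ (-g) := by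
      rw [AddChar.inv_apply, AddChar.mul_apply]
    simp only [hchar, hinv]
    rw [mul_assoc, Finset.sum_mul_sum, Finset.mul_sum]
    refine Finset.sum_congr rfl fun a _ => ?_
    rw [Finset.mul_sum]
    refine Finset.sum_congr rfl fun b _ => ?_
    ring
  simp only [key, fcoeff]
  rw [← Finset.sum_mul, ← Finset.sum_mul]
  ring
end

section
/- Let G be a finite abelian group (written additively) and let Θ₁, Θ₂ : G → ℝ be signals such that for every character χ of G the Fourier coefficient F_{Θ₁}(χ) = ∑_{g∈G} Θ₁(g)·χ(g) is nonzero. If the triple correlations agree, T_{Θ₁}(g₁,g₂) = T_{Θ₂}(g₁,g₂) for all g₁, g₂ ∈ G, then Θ₂ is a translate of Θ₁: there exists h ∈ G such that Θ₂(g) = Θ₁(g+h) for all g ∈ G (the triple correlation is a complete invariant). -/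
open Finset Complex

namespace TripleCorrAux

variable {G : Type*} [AddCommGroup G] [Fintype G]

lemma char_mul_neg (χ : AddChar G ℂ) (x : G) : χ x * χ (-x) = 1 := by
  rw [← AddChar.map_add_eq_mul, add_neg_cancel, AddChar.map_zero_eq_one]

lemma conj_sum (Θ : G → ℝ) (ψ : AddChar G ℂ) :
    (starRingEnd ℂ) (∑ g : G, (Θ g : ℂ) * ψ g) = ∑ g : G, (Θ g : ℂ) * ψ (-g) := by
  rw [map_sum]
  refine Finset.sum_congr rfl fun g _ => ?_
  rw [map_mul, Complex.conj_ofReal, AddChar.map_neg_eq_conj]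

lemma shift (Θ : G → ℝ) (χ : AddChar G ℂ) (g : G) :
    ∑ a : G, (Θ (g + a) : ℂ) * χ a = χ (-g) * ∑ a : G, (Θ a : ℂ) * χ a := by
  rw [Finset.mul_sum]
  refine Fintype.sum_bijective (fun a => g + a) (Equiv.addLeft g).bijective _ _
    fun a => ?_
  have h := char_mul_neg χ g
  rw [AddChar.map_add_eq_mul]
  linear_combination -(Θ (g + a) : ℂ) * χ a * h

lemma bispec (Θ : G → ℝ) (χ₁ χ₂ : AddChar G ℂ) :
    ∑ g₁ : G, ∑ g₂ : G, ((∑ g : G, Θ g * Θ (g + g₁) * Θ (g + g₂) : ℝ) : ℂ) * χ₁ g₁ * χ₂ g₂ =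
      (∑ g : G, (Θ g : ℂ) * χ₁ g) * (∑ g : G, (Θ g : ℂ) * χ₂ g) *
        (starRingEnd ℂ) (∑ g : G, (Θ g : ℂ) * (χ₁ + χ₂) g) := by
  set A := ∑ g : G, (Θ g : ℂ) * χ₁ g with hA
  set B := ∑ g : G, (Θ g : ℂ) * χ₂ g with hB
  rw [conj_sum]
  push_cast
  simp_rw [Finset.sum_mul]
  conv_lhs => enter [2, g₁]; rw [Finset.sum_comm]
  rw [Finset.sum_comm]
  have key : ∀ g : G,
      ∑ g₁ : G, ∑ g₂ : G, (Θ g : ℂ) * (Θ (g + g₁) : ℂ) * (Θ (g + g₂) : ℂ) * χ₁ g₁ * χ₂ g₂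
        = (Θ g : ℂ) * (χ₁ (-g) * A) * (χ₂ (-g) * B) := by
    intro g
    rw [← shift, ← shift]
    simp only [Finset.mul_sum, Finset.sum_mul]
    rw [Finset.sum_comm]
    refine Finset.sum_congr rfl fun g₁ _ => Finset.sum_congr rfl fun g₂ _ => by ring
  rw [Finset.sum_congr rfl fun g _ => key g]
  rw [Finset.mul_sum]
  refine Finset.sum_congr rfl fun g _ => ?_
  simp only [Pi.mul_apply, AddChar.add_apply]
  ring

lemma inversion (f : G → ℂ) (a : G) :
    ∑ χ : AddChar G ℂ, (∑ g : G, f g * χ g) * χ (-a) = (Fintype.card G : ℂ) * f a := by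
  classical
  simp_rw [Finset.sum_mul]
  rw [Finset.sum_comm]
  have key : ∀ g : G, ∑ χ : AddChar G ℂ, f g * χ g * χ (-a)
      = f g * ∑ χ : AddChar G ℂ, χ (g + -a) := by
    intro g
    rw [Finset.mul_sum]
    refine Finset.sum_congr rfl fun χ _ => ?_
    rw [AddChar.map_add_eq_mul]; ring
  rw [Finset.sum_congr rfl fun g _ => key g]
  simp only [AddChar.sum_apply_eq_ite, add_neg_eq_zero, mul_ite, mul_zero]
  rw [Finset.sum_ite_eq' Finset.univ a fun g => f g * (Fintype.card G : ℂ)]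
  simp [mul_comm]

end TripleCorrAux

/-- If all Fourier coefficients of `Θ₁` are nonzero and the triple correlations of `Θ₁`
and `Θ₂` agree, then `Θ₂` is a translate of `Θ₁`: the triple correlation is a complete
translation invariant. -/
theorem tripleCorr_complete {G : Type*} [AddCommGroup G] [Fintype G]
    (Θ₁ Θ₂ : G → ℝ)
    (hF : ∀ χ : AddChar G ℂ, ∑ g : G, (Θ₁ g : ℂ) * χ g ≠ 0)
    (hT : ∀ g₁ g₂ : G,
      ∑ g : G, Θ₁ g * Θ₁ (g + g₁) * Θ₁ (g + g₂) =
        ∑ g : G, Θ₂ g * Θ₂ (g + g₁) * Θ₂ (g + g₂)) :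
    ∃ h : G, ∀ g : G, Θ₂ g = Θ₁ (g + h) := by
  classical
  set F₁ : AddChar G ℂ → ℂ := fun χ => ∑ g : G, (Θ₁ g : ℂ) * χ g with hF₁def
  set F₂ : AddChar G ℂ → ℂ := fun χ => ∑ g : G, (Θ₂ g : ℂ) * χ g with hF₂def
  have key : ∀ χ₁ χ₂ : AddChar G ℂ,
      F₁ χ₁ * F₁ χ₂ * (starRingEnd ℂ) (F₁ (χ₁ + χ₂)) =
      F₂ χ₁ * F₂ χ₂ * (starRingEnd ℂ) (F₂ (χ₁ + χ₂)) := by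
    intro χ₁ χ₂
    rw [hF₁def, hF₂def]
    rw [← TripleCorrAux.bispec, ← TripleCorrAux.bispec]
    exact Finset.sum_congr rfl fun g₁ _ => Finset.sum_congr rfl fun g₂ _ => by rw [hT]
  have hF₁0 : F₁ 0 = ((∑ g : G, Θ₁ g : ℝ) : ℂ) := by push_cast [hF₁def]; simp
  have hF₂0 : F₂ 0 = ((∑ g : G, Θ₂ g : ℝ) : ℂ) := by push_cast [hF₂def]; simp
  -- F₂ 0 = F₁ 0
  have h0 : F₂ 0 = F₁ 0 := by
    have k := key 0 0
    rw [add_zero, hF₁0, hF₂0, Complex.conj_ofReal, Complex.conj_ofReal] at k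
    have k' : ((∑ g : G, Θ₁ g : ℝ) : ℂ) ^ 3 = ((∑ g : G, Θ₂ g : ℝ) : ℂ) ^ 3 := by
      linear_combination k
    rw [← Complex.ofReal_pow, ← Complex.ofReal_pow, Complex.ofReal_inj] at k'
    have heq := ((Odd.strictMono_pow (R := ℝ) ⟨1, by norm_num⟩).injective k')
    rw [hF₁0, hF₂0]
    exact_mod_cast heq.symm
  have hF₁ne : ∀ χ, F₁ χ ≠ 0 := hF
  have hmod : ∀ χ, F₂ χ * (starRingEnd ℂ) (F₂ χ) = F₁ χ * (starRingEnd ℂ) (F₁ χ) := by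
    intro χ
    have k := key χ 0
    rw [add_zero, h0] at k
    have h0ne : F₁ 0 ≠ 0 := hF₁ne 0
    apply mul_right_cancel₀ h0ne
    linear_combination -k
  have hF₂ne : ∀ χ, F₂ χ ≠ 0 := by
    intro χ hχ
    have h' := hmod χ
    rw [hχ, zero_mul] at h'
    rcases mul_eq_zero.1 h'.symm with h | h
    · exact hF₁ne χ h
    · exact hF₁ne χ (by simpa using congrArg (starRingEnd ℂ) h)
  have hmul : ∀ χ₁ χ₂ : AddChar G ℂ,
      F₂ χ₁ * F₂ χ₂ * F₁ (χ₁ + χ₂) = F₁ χ₁ * F₁ χ₂ * F₂ (χ₁ + χ₂) := by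
    intro χ₁ χ₂
    have k := key χ₁ χ₂
    have m := hmod (χ₁ + χ₂)
    have hcne : (starRingEnd ℂ) (F₁ (χ₁ + χ₂)) ≠ 0 := by
      simpa using hF₁ne (χ₁ + χ₂)
    apply mul_right_cancel₀ hcne
    linear_combination (-(F₂ χ₁ * F₂ χ₂)) * m + (-(F₂ (χ₁ + χ₂))) * k
  -- the ratio is a character of the dual group
  let u : AddChar (AddChar G ℂ) ℂ :=
    { toFun := fun χ => F₂ χ / F₁ χ
      map_zero_eq_one' := by show F₂ 0 / F₁ 0 = 1; rw [h0]; exact div_self (hF₁ne 0)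
      map_add_eq_mul' := by
        intro χ₁ χ₂
        show F₂ (χ₁ + χ₂) / F₁ (χ₁ + χ₂) = F₂ χ₁ / F₁ χ₁ * (F₂ χ₂ / F₁ χ₂)
        rw [div_mul_div_comm, div_eq_div_iff (hF₁ne _) (mul_ne_zero (hF₁ne _) (hF₁ne _))]
        linear_combination -(hmul χ₁ χ₂) }
  obtain ⟨h₀, hh₀⟩ := AddChar.doubleDualEmb_bijective.surjective u
  have hu : ∀ χ : AddChar G ℂ, F₂ χ = χ h₀ * F₁ χ := by
    intro χ
    have h1 : χ h₀ = F₂ χ / F₁ χ := by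
      have h2 : AddChar.doubleDualEmb h₀ χ = u χ := by rw [hh₀]
      rw [AddChar.doubleDualEmb_apply] at h2
      exact h2
    rw [h1]
    exact (div_mul_cancel₀ _ (hF₁ne χ)).symm
  -- conclude via Fourier inversion
  refine ⟨-h₀, fun a => ?_⟩
  have hFeq : ∀ χ : AddChar G ℂ, ∑ g : G, ((Θ₁ (g + -h₀) : ℝ) : ℂ) * χ g = F₂ χ := by
    intro χ
    have hs := TripleCorrAux.shift Θ₁ χ (-h₀)
    have : ∑ g : G, ((Θ₁ (g + -h₀) : ℝ) : ℂ) * χ g = ∑ g : G, ((Θ₁ (-h₀ + g) : ℝ) : ℂ) * χ g := by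
      refine Finset.sum_congr rfl fun g _ => by rw [add_comm]
    rw [this, hs, neg_neg, hu χ, hF₁def]
  have h1 := TripleCorrAux.inversion (fun g => ((Θ₂ g : ℝ) : ℂ)) a
  have h2 := TripleCorrAux.inversion (fun g => ((Θ₁ (g + -h₀) : ℝ) : ℂ)) a
  have hsums : (Fintype.card G : ℂ) * ((Θ₂ a : ℝ) : ℂ)
      = (Fintype.card G : ℂ) * ((Θ₁ (a + -h₀) : ℝ) : ℂ) := by
    rw [← h1, ← h2]
    refine Finset.sum_congr rfl fun χ _ => ?_
    rw [hFeq χ, hF₂def]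
  have hcard : (Fintype.card G : ℂ) ≠ 0 := by
    exact_mod_cast Nat.cast_ne_zero.2 Fintype.card_ne_zero
  have := mul_left_cancel₀ hcard hsums
  exact_mod_cast this
end
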